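/- arXiv:2506.07835 — 2 statements merged into one kernel-verified Lean document; each statement's English description precedes it below -/
import Mathlib

section
/- For every θ > 0 and every ε ∈ (0,1), the regularized potential satisfies F_ε(s) ≤ F(s) for every s ∈ [−1,1]. -/
open Real Set Filter MeasureTheory

/-- The Flory–Huggins potential. -/
noncomputable def FH (θ s : ℝ) : ℝ :=
  (θ / 2) * ((1 + s) * Real.log (1 + s) + (1 - s) * Real.log (1 - s))

/-- Its first derivative on `(-1,1)`. -/
noncomputable def FH' (θ s : ℝ) : ℝ :=
  (θ / 2) * Real.log ((1 + s) / (1 - s))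

/-- The regularized (quadratic extension) Flory–Huggins potential `F_ε`.
Note that `F''(±(1-ε)) = θ/(ε(2-ε))`. -/
noncomputable def FHreg (θ ε s : ℝ) : ℝ :=
  if 1 - ε < s then
    FH θ (1 - ε) + FH' θ (1 - ε) * (s - (1 - ε))
      + (1 / 2) * (θ / (ε * (2 - ε))) * (s - (1 - ε)) ^ 2
  else if s < -1 + ε then
    FH θ (-1 + ε) + FH' θ (-1 + ε) * (s - (-1 + ε))
      + (1 / 2) * (θ / (ε * (2 - ε))) * (s - (-1 + ε)) ^ 2
  else FH θ s

/-!
On `[1 - ε, 1]` the regularization is the second-order Taylor polynomial of `F` at `a = 1 - ε`.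
Since `F'' = θ / (1 - s²)` is increasing on `[0, 1)`, `F'' ≥ F''(a)` to the right of `a`;
comparing derivatives twice gives first `F'(a) + F''(a) (s - a) ≤ F'(s)` and then the Taylor
polynomial below `F`, up to the endpoint `s = 1` where only continuity of `F` is available.
The branch `s < -1 + ε` follows from the symmetry `s ↦ -s`.
-/

lemma FH_neg (θ s : ℝ) : FH θ (-s) = FH θ s := by
  simp only [FH, sub_neg_eq_add, ← sub_eq_add_neg]
  ring

lemma FH'_neg (θ s : ℝ) : FH' θ (-s) = -FH' θ s := by
  rw [FH', FH', ← sub_eq_add_neg, sub_neg_eq_add, ← inv_div (1 + s), Real.log_inv, mul_neg]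

lemma continuous_FH (θ : ℝ) : Continuous (FH θ) :=
  continuous_const.mul
    ((continuous_const.add continuous_id).mul_log.add (continuous_const.sub continuous_id).mul_log)

lemma hasDerivAt_FH (θ : ℝ) {s : ℝ} (h1 : -1 < s) (h2 : s < 1) :
    HasDerivAt (FH θ) (FH' θ s) s := by
  have hp : 1 + s ≠ 0 := by linarith
  have hm : 1 - s ≠ 0 := by linarith
  have d := (((Real.hasDerivAt_mul_log hp).comp s ((hasDerivAt_id s).const_add 1)).add
    ((Real.hasDerivAt_mul_log hm).comp s ((hasDerivAt_id s).const_sub 1))).const_mul (θ / 2)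
  refine d.congr_deriv ?_
  rw [FH', Real.log_div hp hm]
  ring

lemma hasDerivAt_FH' (θ : ℝ) {s : ℝ} (h1 : -1 < s) (h2 : s < 1) :
    HasDerivAt (FH' θ) (θ / (1 - s ^ 2)) s := by
  have hp : 1 + s ≠ 0 := by linarith
  have hm : 1 - s ≠ 0 := by linarith
  have d := ((((hasDerivAt_id s).const_add 1).div ((hasDerivAt_id s).const_sub 1) hm).log
    (div_ne_zero hp hm)).const_mul (θ / 2)
  refine d.congr_deriv ?_
  simp only [id, Pi.div_apply]
  rw [show 1 - s ^ 2 = (1 + s) * (1 - s) by ring]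
  field_simp
  ring

lemma FH'_tangent_le {θ a x : ℝ} (hθ : 0 ≤ θ) (ha : 0 ≤ a) (hax : a ≤ x) (hx : x < 1) :
    FH' θ a + θ / (1 - a ^ 2) * (x - a) ≤ FH' θ x := by
  have hFH' : ∀ y ∈ Icc a x, HasDerivAt (FH' θ) (θ / (1 - y ^ 2)) y := fun y hy =>
    hasDerivAt_FH' θ (by linarith [hy.1]) (by linarith [hy.2])
  refine image_le_of_deriv_right_le_deriv_boundary
    (f := fun y => FH' θ a + θ / (1 - a ^ 2) * (y - a)) (f' := fun _ => θ / (1 - a ^ 2))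
    (by fun_prop) (fun y _ => ?_) (by simp)
    (fun y hy => (hFH' y hy).continuousAt.continuousWithinAt)
    (fun y hy => (hFH' y (Ico_subset_Icc_self hy)).hasDerivWithinAt) (fun y hy => ?_) ⟨hax, le_rfl⟩
  · exact ((((hasDerivAt_id y).sub_const a).const_mul _).const_add _).hasDerivWithinAt.congr_deriv
      (by simp)
  · have : 0 < 1 - y ^ 2 := by nlinarith [hy.1, hy.2]
    gcongr
    nlinarith [hy.1]

lemma FH_taylor_le {θ a x : ℝ} (hθ : 0 ≤ θ) (ha : 0 ≤ a) (hax : a ≤ x) (hx : x ≤ 1) :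
    FH θ a + FH' θ a * (x - a) + (1 / 2) * (θ / (1 - a ^ 2)) * (x - a) ^ 2 ≤ FH θ x := by
  have hFH : ∀ y ∈ Ico a x, HasDerivAt (FH θ) (FH' θ y) y := fun y hy =>
    hasDerivAt_FH θ (by linarith [hy.1]) (by linarith [hy.2])
  refine image_le_of_deriv_right_le_deriv_boundary
    (f := fun y => FH θ a + FH' θ a * (y - a) + (1 / 2) * (θ / (1 - a ^ 2)) * (y - a) ^ 2)
    (f' := fun y => FH' θ a + θ / (1 - a ^ 2) * (y - a)) (by fun_prop) (fun y _ => ?_) (by simp)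
    (continuous_FH θ).continuousOn (fun y hy => (hFH y hy).hasDerivWithinAt)
    (fun y hy => FH'_tangent_le hθ ha hy.1 (by linarith [hy.2])) ⟨hax, le_rfl⟩
  refine ((((hasDerivAt_id y).sub_const a).const_mul _).const_add _ |>.add
    ((((hasDerivAt_id y).sub_const a).pow 2).const_mul _)).hasDerivWithinAt.congr_deriv ?_
  simp only [id_eq, Nat.cast_ofNat, Nat.add_one_sub_one, pow_one]
  ring

theorem FHreg_le_FH (θ ε : ℝ) (hθ : 0 < θ) (hε : ε ∈ Set.Ioo (0 : ℝ) 1) :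
    ∀ s ∈ Set.Icc (-1 : ℝ) 1, FHreg θ ε s ≤ FH θ s := by
  rintro s ⟨hs₁, hs₂⟩
  have ha : 0 ≤ 1 - ε := by linarith [hε.2]
  have hF'' : ε * (2 - ε) = 1 - (1 - ε) ^ 2 := by ring
  unfold FHreg
  split_ifs with hright hleft
  · rw [hF'']
    exact FH_taylor_le hθ.le ha hright.le hs₂
  · have h := FH_taylor_le (x := -s) hθ.le ha (by linarith) (by linarith)
    rw [FH_neg] at h
    rw [show -1 + ε = -(1 - ε) by ring, FH_neg, FH'_neg, hF'']
    convert h using 2 <;> ring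
  · exact le_rfl
end

section
/- Let (Ω, μ) be a measure space, let ρ : Ω → ℝ be μ-integrable with ρ ≥ 0 μ-a.e. and set M = ∫ ρ dμ. Let c : Ω → ℝ be measurable, let g : ℝ → ℝ be odd (g(−s) = −g(s)) and nondecreasing, and let M_r, K₀ ∈ ℝ satisfy |M_r| < K₀ < 1. Assume that ρ·g(c) and ρ·g(c)·(c − M_r) are μ-integrable. Then ∫ ρ·|g(c)| dμ ≤ (K₀ − |M_r|)⁻¹ · ∫ ρ·g(c)·(c − M_r) dμ + (2/(K₀ − |M_r|) + 1) · M · g(K₀). -/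
open MeasureTheory Set

theorem abs_entropy_derivative_estimate
    {Ω : Type*} [MeasurableSpace Ω] (μ : Measure Ω)
    (ρ : Ω → ℝ) (hρint : Integrable ρ μ) (hρ0 : ∀ᵐ x ∂μ, 0 ≤ ρ x)
    (c : Ω → ℝ) (hcm : Measurable c)
    (g : ℝ → ℝ) (hodd : ∀ s : ℝ, g (-s) = -g s) (hg : Monotone g)
    (Mr K₀ : ℝ) (hMr : |Mr| < K₀) (hK₀ : K₀ < 1)
    (hρg : Integrable (fun x => ρ x * g (c x)) μ)
    (hρgc : Integrable (fun x => ρ x * g (c x) * (c x - Mr)) μ) :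
    ∫ x, ρ x * |g (c x)| ∂μ ≤
      (K₀ - |Mr|)⁻¹ * ∫ x, ρ x * g (c x) * (c x - Mr) ∂μ +
        (2 / (K₀ - |Mr|) + 1) * (∫ x, ρ x ∂μ) * g K₀ := by
  set δ : ℝ := K₀ - |Mr| with hδdef
  have hδ : 0 < δ := by simp [hδdef]; linarith
  have hK₀pos : 0 < K₀ := lt_of_le_of_lt (abs_nonneg Mr) hMr
  have hg0 : g 0 = 0 := by have := hodd 0; simp at this; linarith
  have hgK₀ : 0 ≤ g K₀ := by rw [← hg0]; exact hg hK₀pos.le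
  have hMr1 : |Mr| < 1 := hMr.trans hK₀
  -- key pointwise estimate
  have key : ∀ t : ℝ, |g t| ≤ δ⁻¹ * (g t * (t - Mr)) + (2 / δ + 1) * g K₀ := by
    intro t
    rcases le_or_gt K₀ t with h1 | h1
    · have hgt : g K₀ ≤ g t := hg h1
      have habs : |g t| = g t := abs_of_nonneg (hgK₀.trans hgt)
      have ht : δ ≤ t - Mr := by
        have := neg_abs_le Mr; have := le_abs_self Mr; simp [hδdef]; linarith
      have h2 : δ * g t ≤ g t * (t - Mr) := by
        nlinarith [hgK₀.trans hgt]
      rw [habs]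
      have h3 : g t ≤ δ⁻¹ * (g t * (t - Mr)) := by
        rw [le_inv_mul_iff₀ hδ]; exact h2
      nlinarith [mul_nonneg (by positivity : (0:ℝ) ≤ 2 / δ + 1) hgK₀]
    rcases le_or_gt t (-K₀) with h2 | h2
    · have hgt : g t ≤ g (-K₀) := hg h2
      rw [hodd] at hgt
      have habs : |g t| = -g t := abs_of_nonpos (by linarith)
      have ht : t - Mr ≤ -δ := by
        have := le_abs_self Mr; have := neg_abs_le Mr; simp [hδdef]; linarith
      have h3 : δ * (-g t) ≤ g t * (t - Mr) := by nlinarith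
      rw [habs]
      have h4 : -g t ≤ δ⁻¹ * (g t * (t - Mr)) := by
        rw [le_inv_mul_iff₀ hδ]; exact h3
      nlinarith [mul_nonneg (by positivity : (0:ℝ) ≤ 2 / δ + 1) hgK₀]
    · -- -K₀ < t < K₀
      have hub : g t ≤ g K₀ := hg h1.le
      have hlb : -g K₀ ≤ g t := by
        have := hg h2.le; rw [hodd] at this; linarith
      have habs : |g t| ≤ g K₀ := abs_le.2 ⟨hlb, hub⟩
      have htMr : |t - Mr| ≤ 2 := by
        have h2a : -1 < Mr ∧ Mr < 1 := abs_lt.1 hMr1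
        rw [abs_sub_le_iff]
        constructor <;> linarith
      have hprod : -(2 * g K₀) ≤ g t * (t - Mr) := by
        have : |g t * (t - Mr)| ≤ g K₀ * 2 := by
          rw [abs_mul]
          exact mul_le_mul habs htMr (abs_nonneg _) hgK₀
        have := neg_abs_le (g t * (t - Mr)); linarith
      have h5 : -(2 / δ * g K₀) ≤ δ⁻¹ * (g t * (t - Mr)) := by
        have := mul_le_mul_of_nonneg_left hprod (le_of_lt (inv_pos.2 hδ))
        calc -(2 / δ * g K₀) = δ⁻¹ * (-(2 * g K₀)) := by ring
          _ ≤ δ⁻¹ * (g t * (t - Mr)) := this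
      nlinarith
  -- integrability
  have hint1 : Integrable (fun x => ρ x * |g (c x)|) μ := by
    refine hρg.abs.congr ?_
    filter_upwards [hρ0] with x hx
    rw [abs_mul, abs_of_nonneg hx]
  set C : ℝ := (2 / δ + 1) * g K₀ with hC
  have hint2 : Integrable
      (fun x => δ⁻¹ * (ρ x * g (c x) * (c x - Mr)) + C * ρ x) μ :=
    (hρgc.const_mul _).add (hρint.const_mul _)
  have hmono : ∫ x, ρ x * |g (c x)| ∂μ ≤
      ∫ x, δ⁻¹ * (ρ x * g (c x) * (c x - Mr)) + C * ρ x ∂μ := by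
    refine integral_mono_ae hint1 hint2 ?_
    filter_upwards [hρ0] with x hx
    have h := mul_le_mul_of_nonneg_left (key (c x)) hx
    calc ρ x * |g (c x)| ≤ ρ x * (δ⁻¹ * (g (c x) * (c x - Mr)) + (2 / δ + 1) * g K₀) := h
      _ = δ⁻¹ * (ρ x * g (c x) * (c x - Mr)) + C * ρ x := by rw [hC]; ring
  have heq : ∫ x, δ⁻¹ * (ρ x * g (c x) * (c x - Mr)) + C * ρ x ∂μ =
      δ⁻¹ * (∫ x, ρ x * g (c x) * (c x - Mr) ∂μ) + C * ∫ x, ρ x ∂μ := by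
    rw [integral_add (hρgc.const_mul _) (hρint.const_mul _),
      integral_const_mul, integral_const_mul]
  rw [heq] at hmono
  calc ∫ x, ρ x * |g (c x)| ∂μ
      ≤ δ⁻¹ * (∫ x, ρ x * g (c x) * (c x - Mr) ∂μ) + C * ∫ x, ρ x ∂μ := hmono
    _ = (K₀ - |Mr|)⁻¹ * ∫ x, ρ x * g (c x) * (c x - Mr) ∂μ +
        (2 / (K₀ - |Mr|) + 1) * (∫ x, ρ x ∂μ) * g K₀ := by rw [hC, hδdef]; ring
end
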